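/- arXiv:1809.10338 — 4 statements merged into one kernel-verified Lean document; each statement's English description precedes it below -/
import Mathlib

section
/- Generalized diamond lemma for filtered presentations: Let (R, W, d) be a filtered presentation of vector spaces over a field K in which every relator is either a reduction relator or a horizontal relator. Then the presentation is E¹-convergent if and only if every canceling sequence is consistently reducible. -/
/-- A *filtered presentation of vector spaces* over a field `K`: `K`-vector spaces `R` and `W`,
a basis of `W` indexed by `I` whose elements are called *webs*, together with a degree
function `deg : I → ℕ`, a basis of `R` indexed by `P` whose elements are called *relators*,
and a `K`-linear map `d : R → W` with `d [r] ≠ 0` for every relator `r`. -/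
structure FilteredPresentation (K W R I P : Type*) [Field K]
    [AddCommGroup W] [Module K W] [AddCommGroup R] [Module K R] where
  /-- the basis of webs -/
  web : Module.Basis I K W
  /-- the degree of each web -/
  deg : I → ℕ
  /-- the basis of relators -/
  rel : Module.Basis P K R
  /-- the structure map of the presentation -/
  d : R →ₗ[K] W
  /-- `d` is nonzero on every relator -/
  d_rel_ne_zero : ∀ p : P, d (rel p) ≠ 0

namespace FilteredPresentation

variable {K W R I P : Type*} [Field K]
  [AddCommGroup W] [Module K W] [AddCommGroup R] [Module K R]
  (FP : FilteredPresentation K W R I P)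

/-- `FₙW` : the span of the webs of degree at most `n`. -/
def FWle (n : ℕ) : Submodule K W :=
  Submodule.span K ((fun i => FP.web i) '' {i | FP.deg i ≤ n})

/-- `Fₙ₋₁W` : the span of the webs of degree strictly less than `n`
(so its value at `n = 0` is `F₋₁W = 0`). -/
def FWlt (n : ℕ) : Submodule K W :=
  Submodule.span K ((fun i => FP.web i) '' {i | FP.deg i < n})

/-- The degree `|r|` of a relator: the least `n` such that `d [r] ∈ FₙW`. -/
noncomputable def rdeg (p : P) : ℕ :=
  sInf {n : ℕ | FP.d (FP.rel p) ∈ FP.FWle n}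

/-- `Fₙ₋₁R` : the span of the relators of degree strictly less than `n`. -/
def FRlt (n : ℕ) : Submodule K R :=
  Submodule.span K ((fun p => FP.rel p) '' {p | FP.rdeg p < n})

/-- The *leading term* at filtration level `n` of an element `x` of `R`: the class of `d x`
in `W ⧸ Fₙ₋₁W`.  (For a relator of degree `n` this class lies in `grₙW = FₙW/Fₙ₋₁W`,
realized inside the ambient quotient `W ⧸ Fₙ₋₁W`.) -/
def lead (n : ℕ) (x : R) : W ⧸ FP.FWlt n :=
  (FP.FWlt n).mkQ (FP.d x)

/-- A relator is a *reduction relator* if its leading term is the class of a single web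
(necessarily of degree `|r|`). -/
def IsReductionRel (p : P) : Prop :=
  ∃ i : I, FP.deg i = FP.rdeg p ∧
    FP.lead (FP.rdeg p) (FP.rel p) = (FP.FWlt (FP.rdeg p)).mkQ (FP.web i)

/-- A relator is a *horizontal relator* if its leading term is the difference `u - v` of the
classes of two distinct webs (necessarily of degree `|r|`). -/
def IsHorizontalRel (p : P) : Prop :=
  ∃ i j : I, i ≠ j ∧ FP.deg i = FP.rdeg p ∧ FP.deg j = FP.rdeg p ∧
    FP.lead (FP.rdeg p) (FP.rel p) =
      (FP.FWlt (FP.rdeg p)).mkQ (FP.web i) - (FP.FWlt (FP.rdeg p)).mkQ (FP.web j)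

/-- A *canceling sequence* of degree `n`: a (nonempty) finite sequence `s₁, …, s_m` of
signed relators of degree `n` (each `sᵢ` is `±[r]` for a relator `r` of degree `n`),
together with elements `w₀, w₁, …, w_m` of `W ⧸ Fₙ₋₁W`, each either `0` or the class of a
single web of degree `n`, with `w₁, …, w_{m-1}` nonzero, `w₀ = w_m`, and such that the
leading term of `sᵢ` is `wᵢ - wᵢ₋₁` for all `i`. -/
structure CancelingSeq (n : ℕ) where
  /-- the underlying list `s₁, …, s_m` of signed relators -/
  s : List R
  /-- the witnessing list `w₀, w₁, …, w_m` -/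
  w : List (W ⧸ FP.FWlt n)
  nonempty : 0 < s.length
  len : w.length = s.length + 1
  signed : ∀ x ∈ s, ∃ p : P, (x = FP.rel p ∨ x = -FP.rel p) ∧ FP.rdeg p = n
  w_mem : ∀ u ∈ w, u = 0 ∨ ∃ i : I, FP.deg i = n ∧ u = (FP.FWlt n).mkQ (FP.web i)
  w_mid_ne : ∀ k : ℕ, 0 < k → k < s.length → w.getD k 0 ≠ 0
  w_cycle : w.getD 0 0 = w.getD s.length 0
  lead_step : ∀ k < s.length,
    FP.lead n (s.getD k 0) = w.getD (k + 1) 0 - w.getD k 0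

namespace CancelingSeq

variable {FP} {n : ℕ}

/-- `Σs` : the sum `s₁ + ⋯ + s_m ∈ R` of the signed relators of a canceling sequence. -/
def total (c : FP.CancelingSeq n) : R := c.s.sum

/-- A canceling sequence is a *reduction sequence* if `w₀ = w_m = 0`. -/
def IsReductionSeq (c : FP.CancelingSeq n) : Prop :=
  c.w.getD 0 0 = 0 ∧ c.w.getD c.s.length 0 = 0

/-- A canceling sequence is a *horizontal sequence* if it is not a reduction sequence. -/
def IsHorizontalSeq (c : FP.CancelingSeq n) : Prop :=
  ¬ c.IsReductionSeq

/-- A canceling sequence `s` of degree `n` is *consistently reducible* if there exists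
`y ∈ Fₙ₋₁R` with `d y = d (Σs)`. -/
def ConsistentlyReducible (c : FP.CancelingSeq n) : Prop :=
  ∃ y ∈ FP.FRlt n, FP.d y = FP.d c.total

end CancelingSeq

/-- The presentation is *E¹-convergent* (its associated two-column spectral sequence
converges at the first page) if for every `n ∈ ℕ` and every `x` in the span of the
relators of degree exactly `n` with `d x ∈ Fₙ₋₁W`, there exists `y ∈ Fₙ₋₁R` with
`d y = d x`. -/
def E1Convergent : Prop :=
  ∀ n : ℕ, ∀ x ∈ Submodule.span K ((fun p => FP.rel p) '' {p | FP.rdeg p = n}),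
    FP.d x ∈ FP.FWlt n → ∃ y ∈ FP.FRlt n, FP.d y = FP.d x


section Aux

variable {K W R I P : Type*} [Field K]
  [AddCommGroup W] [Module K W] [AddCommGroup R] [Module K R]
  (FP : FilteredPresentation K W R I P)

lemma FWle_mono {m n : ℕ} (h : m ≤ n) : FP.FWle m ≤ FP.FWle n :=
  Submodule.span_mono (Set.image_mono (fun i hi => le_trans hi h))

lemma FWlt_mono {m n : ℕ} (h : m ≤ n) : FP.FWlt m ≤ FP.FWlt n :=
  Submodule.span_mono (Set.image_mono (fun i hi => lt_of_lt_of_le hi h))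

lemma d_rel_mem_FWle (p : P) : FP.d (FP.rel p) ∈ FP.FWle (FP.rdeg p) := by
  have hne : {n : ℕ | FP.d (FP.rel p) ∈ FP.FWle n}.Nonempty := by
    refine ⟨(FP.web.repr (FP.d (FP.rel p))).support.sup FP.deg, ?_⟩
    simp only [Set.mem_setOf_eq]
    rw [FWle, FP.web.mem_span_image]
    intro i hi
    show FP.deg i ≤ _
    exact Finset.le_sup hi
  exact Nat.sInf_mem hne

lemma FWle_eq_FWlt (n : ℕ) : FP.FWle n = FP.FWlt (n + 1) := by
  have h : {i | FP.deg i ≤ n} = {i | FP.deg i < n + 1} := by ext i; simp [Nat.lt_succ_iff]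
  rw [FWle, FWlt, h]

lemma d_rel_not_mem_FWlt (p : P) : FP.d (FP.rel p) ∉ FP.FWlt (FP.rdeg p) := by
  intro h
  rcases Nat.eq_zero_or_eq_succ_pred (FP.rdeg p) with h0 | hs
  · rw [h0] at h
    have he : {i | FP.deg i < 0} = (∅ : Set I) := by ext i; simp
    rw [FWlt, he, Set.image_empty, Submodule.span_empty, Submodule.mem_bot] at h
    exact FP.d_rel_ne_zero p h
  · rw [hs, ← FWle_eq_FWlt] at h
    have : FP.rdeg p ≤ FP.rdeg p - 1 := Nat.sInf_le h
    omega

lemma d_mem_FWlt_of_FRlt {n : ℕ} {y : R} (hy : y ∈ FP.FRlt n) : FP.d y ∈ FP.FWlt n := by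
  refine Submodule.span_induction ?_ ?_ ?_ ?_ hy
  · rintro x ⟨p, hp, rfl⟩
    have h1 : FP.d (FP.rel p) ∈ FP.FWle (FP.rdeg p) := FP.d_rel_mem_FWle p
    have h2 : FP.FWle (FP.rdeg p) ≤ FP.FWlt n := by
      rw [FP.FWle_eq_FWlt]
      exact FP.FWlt_mono (by exact hp)
    exact h2 h1
  · simp
  · intro x y _ _ hx hy; rw [map_add]; exact Submodule.add_mem _ hx hy
  · intro a x _ hx; rw [map_smul]; exact Submodule.smul_mem _ a hx

lemma finsupp_eq_zero {n : ℕ} (f : I →₀ K) (hf : ∀ i ∈ f.support, FP.deg i = n)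
    (h : Finsupp.linearCombination K (fun i => FP.web i) f ∈ FP.FWlt n) : f = 0 := by
  rw [FWlt, FP.web.mem_span_image, FP.web.repr_linearCombination] at h
  ext i
  simp only [Finsupp.coe_zero, Pi.zero_apply]
  by_contra hi
  have hi' : i ∈ f.support := Finsupp.mem_support_iff.2 hi
  have h1 : FP.deg i < n := h hi'
  have h2 := hf i hi'
  omega

lemma mkQ_web_ne_zero {n : ℕ} {i : I} (h : FP.deg i = n) :
    (FP.FWlt n).mkQ (FP.web i) ≠ 0 := by
  intro hz
  rw [Submodule.mkQ_apply, Submodule.Quotient.mk_eq_zero, FWlt, FP.web.mem_span_image] at hz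
  have hs : i ∈ (FP.web.repr (FP.web i)).support := by simp [FP.web.repr_self]
  have h2 : FP.deg i < n := hz hs
  omega

end Aux

section Forward

variable {K W R I P : Type*} [Field K]
  [AddCommGroup W] [Module K W] [AddCommGroup R] [Module K R]
  (FP : FilteredPresentation K W R I P)

lemma list_sum_eq_sum_getD {M : Type*} [AddCommMonoid M] (l : List M) :
    l.sum = ∑ k ∈ Finset.range l.length, l.getD k 0 := by
  induction l with
  | nil => simp
  | cons a l ih =>
    rw [List.sum_cons, List.length_cons, Finset.sum_range_succ', ih]
    simp [add_comm]

lemma total_mem_span {n : ℕ} (c : FP.CancelingSeq n) :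
    c.total ∈ Submodule.span K ((fun p => FP.rel p) '' {p | FP.rdeg p = n}) := by
  refine list_sum_mem (fun x hx => ?_)
  obtain ⟨p, hp | hp, hdeg⟩ := c.signed x hx
  · exact hp ▸ Submodule.subset_span ⟨p, hdeg, rfl⟩
  · exact hp ▸ Submodule.neg_mem _ (Submodule.subset_span ⟨p, hdeg, rfl⟩)

lemma d_total_mem_FWlt {n : ℕ} (c : FP.CancelingSeq n) : FP.d c.total ∈ FP.FWlt n := by
  rw [← Submodule.Quotient.mk_eq_zero, ← Submodule.mkQ_apply]
  have h1 : (FP.FWlt n).mkQ (FP.d c.total) =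
      ∑ k ∈ Finset.range c.s.length, FP.lead n (c.s.getD k 0) := by
    show ((FP.FWlt n).mkQ ∘ₗ FP.d) c.total = _
    rw [CancelingSeq.total, list_sum_eq_sum_getD, map_sum]
    rfl
  rw [h1, Finset.sum_congr rfl (fun k hk => c.lead_step k (Finset.mem_range.mp hk)),
    Finset.sum_range_sub (fun k => c.w.getD k 0), ← c.w_cycle, sub_self]

end Forward

section Extraction

variable {K W R I P : Type*} [Field K]
  [AddCommGroup W] [Module K W] [AddCommGroup R] [Module K R]
  (FP : FilteredPresentation K W R I P)

lemma sum_list_range_map {M : Type*} [AddCommMonoid M] (f : ℕ → M) (a : ℕ) :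
    ((List.range a).map f).sum = ∑ t ∈ Finset.range a, f t := by
  induction a with
  | zero => simp
  | succ a ih => rw [List.range_succ, List.map_append, List.sum_append, Finset.sum_range_succ, ih]; simp

lemma getD_map_range {α : Type*} (a t : ℕ) (f : ℕ → α) (z : α) (h : t < a) :
    (((List.range a).map f).getD t z) = f t := by
  rw [List.getD_eq_getElem?_getD]
  simp [List.getElem?_range, h]

lemma exists_TS [Nonempty I] {n : ℕ} (p : P)
    (hrel : FP.IsReductionRel p ∨ FP.IsHorizontalRel p) :
    ∃ (t : I) (s : Option I), FP.rdeg p = n →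
      (FP.deg t = n ∧ (∀ j, s = some j → FP.deg j = n ∧ j ≠ t) ∧
       FP.lead n (FP.rel p) =
         (FP.FWlt n).mkQ (FP.web t) - s.elim 0 (fun j => (FP.FWlt n).mkQ (FP.web j))) := by
  by_cases h : FP.rdeg p = n
  · subst h
    rcases hrel with ⟨i, hdeg, hlead⟩ | ⟨i, j, hij, hdi, hdj, hlead⟩
    · exact ⟨i, none, fun _ => ⟨hdeg, by simp, by simp [hlead]⟩⟩
    · refine ⟨i, some j, fun _ => ⟨hdi, ?_, by simpa using hlead⟩⟩
      rintro j' hj'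
      cases hj'
      exact ⟨hdj, hij.symm⟩
  · exact ⟨Classical.arbitrary I, none, fun hn => absurd hn h⟩

end Extraction

section Ext2

variable {K W R I P : Type*} [Field K]
  [AddCommGroup W] [Module K W] [AddCommGroup R] [Module K R]
  (FP : FilteredPresentation K W R I P)

lemma extraction {n : ℕ} (hrel : ∀ p : P, FP.IsReductionRel p ∨ FP.IsHorizontalRel p)
    (F : Finset P) (hF : F.Nonempty) (c : P → K)
    (hdeg : ∀ p ∈ F, FP.rdeg p = n) (hc : ∀ p ∈ F, c p ≠ 0)
    (hsum : FP.d (∑ p ∈ F, c p • FP.rel p) ∈ FP.FWlt n) :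
    ∃ (m : ℕ) (pp : ℕ → P) (ε : ℕ → K) (csq : FP.CancelingSeq n),
      0 < m ∧ (∀ t, t < m → pp t ∈ F) ∧ (∀ t, t < m → ε t = 1 ∨ ε t = -1) ∧
      (∀ t, 0 < t → t < m → pp t ≠ pp 0) ∧
      csq.total = ∑ t ∈ Finset.range m, ε t • FP.rel (pp t) := by
  classical
  obtain ⟨p₀, hp₀⟩ := hF
  have hI : Nonempty I := by
    rcases hrel p₀ with ⟨i, -, -⟩ | ⟨i, -, -⟩ <;> exact ⟨i⟩
  choose T S hTS using fun p => FP.exists_TS (n := n) p (hrel p)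
  have hT : ∀ p ∈ F, FP.deg (T p) = n := fun p hp => ((hTS p) (hdeg p hp)).1
  have hS : ∀ p ∈ F, ∀ j, S p = some j → FP.deg j = n ∧ j ≠ T p :=
    fun p hp => ((hTS p) (hdeg p hp)).2.1
  have hL : ∀ p ∈ F, FP.lead n (FP.rel p) =
      (FP.FWlt n).mkQ (FP.web (T p)) -
        (S p).elim 0 (fun j => (FP.FWlt n).mkQ (FP.web j)) :=
    fun p hp => ((hTS p) (hdeg p hp)).2.2
  have hSne : ∀ p ∈ F, S p ≠ some (T p) := by
    intro p hp h
    exact ((hS p hp _ h).2) rfl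
  -- Step A : balance
  have haveG : ∀ i : I,
      (∑ q ∈ F, ((if T q = i then c q else 0) - (if S q = some i then c q else 0))) = 0 := by
    set G : I →₀ K := ∑ q ∈ F,
      (Finsupp.single (T q) (c q) - (S q).elim 0 (fun j => Finsupp.single j (c q))) with hG
    have hGapply : ∀ i : I, G i =
        ∑ q ∈ F, ((if T q = i then c q else 0) - (if S q = some i then c q else 0)) := by
      intro i
      rw [hG, Finset.sum_apply']
      refine Finset.sum_congr rfl (fun q _ => ?_)
      rw [Finsupp.sub_apply, Finsupp.single_apply]
      congr 1
      cases hSq : S q with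
      | none => simp
      | some j => simp [Finsupp.single_apply]
    have hGlc : Finsupp.linearCombination K (fun i => FP.web i) G ∈ FP.FWlt n := by
      rw [← Submodule.Quotient.mk_eq_zero, ← Submodule.mkQ_apply]
      have key : (FP.FWlt n).mkQ (Finsupp.linearCombination K (fun i => FP.web i) G)
          = (FP.FWlt n).mkQ (FP.d (∑ p ∈ F, c p • FP.rel p)) := by
        rw [hG, map_sum, map_sum, map_sum, map_sum]
        refine Finset.sum_congr rfl (fun q hq => ?_)
        rw [map_smul, map_smul]
        show _ = c q • FP.lead n (FP.rel q)
        rw [hL q hq, map_sub, map_sub, Finsupp.linearCombination_single, map_smul, smul_sub]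
        congr 1
        cases hSq : S q with
        | none => simp
        | some j => simp [Finsupp.linearCombination_single]
      rw [key, Submodule.mkQ_apply, Submodule.Quotient.mk_eq_zero]
      exact hsum
    have hGsupp : ∀ i ∈ G.support, FP.deg i = n := by
      intro i hi
      by_contra hne
      have hzero : G i = 0 := by
        rw [hGapply i]
        refine Finset.sum_eq_zero (fun q hq => ?_)
        rw [if_neg (fun h => hne (by rw [← h]; exact hT q hq)), if_neg (fun h => hne ((hS q hq i h).1)),
          sub_zero]
      exact Finsupp.mem_support_iff.mp hi hzero
    have hG0 : G = 0 := FP.finsupp_eq_zero G hGsupp hGlc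
    intro i
    rw [← hGapply i, hG0, Finsupp.coe_zero, Pi.zero_apply]

  -- Step B : every incident vertex has a second edge
  have balance : ∀ (i : I), ∀ p ∈ F, (some (T p) = some i ∨ S p = some i) →
      ∃ q ∈ F, q ≠ p ∧ (some (T q) = some i ∨ S q = some i) := by
    intro i p hp hinc
    by_contra hcon
    push_neg at hcon
    have hsingle : ∀ q ∈ F, q ≠ p →
        ((if T q = i then c q else 0) - (if S q = some i then c q else 0)) = 0 := by
      intro q hq hqp
      have := hcon q hq hqp
      rw [if_neg (fun h => this.1 (by rw [h])), if_neg this.2, sub_zero]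
    have hterm := Finset.sum_eq_single_of_mem p hp (fun q hq hqp => hsingle q hq hqp)
    rw [haveG i] at hterm
    rcases hinc with h | h
    · have hTi : T p = i := by injection h
      have hSi : S p ≠ some i := by
        intro hs; exact hSne p hp (by rw [hs, ← hTi])
      rw [if_pos hTi, if_neg hSi, sub_zero] at hterm
      exact hc p hp hterm.symm
    · have hTi : T p ≠ i := by
        intro ht; exact hSne p hp (by rw [h, ht])
      rw [if_neg hTi, if_pos h, zero_sub, eq_comm, neg_eq_zero] at hterm
      exact hc p hp hterm
  -- Step C : the walk
  let other : P → Option I → Option I := fun p v => if some (T p) = v then S p else some (T p)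
  let next : Option I → P → P := fun v p =>
    if h : ∃ q ∈ F, q ≠ p ∧ (some (T q) = v ∨ S q = v) then h.choose else p
  let start : P × Option I := if h : ∃ p ∈ F, S p = none then (h.choose, none)
    else (p₀, some (T p₀))
  let e0 : P := start.1
  let v0 : Option I := start.2
  let VE : ℕ → Option I × P := fun k =>
    Nat.rec (v0, e0) (fun _ s => (other s.2 s.1, next (other s.2 s.1) s.2)) k
  let V : ℕ → Option I := fun k => (VE k).1
  let E : ℕ → P := fun k => (VE k).2
  have hV0 : V 0 = v0 := rfl
  have hE0 : E 0 = e0 := rfl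
  have hVsucc : ∀ k, V (k + 1) = other (E k) (V k) := fun k => rfl
  have hEsucc : ∀ k, E (k + 1) = next (V (k + 1)) (E k) := fun k => rfl
  have hother_pos : ∀ p v, some (T p) = v → other p v = S p := fun p v h => if_pos h
  have hother_neg : ∀ p v, ¬(some (T p) = v) → other p v = some (T p) := fun p v h => if_neg h
  have hnext_pos : ∀ v p, (h : ∃ q ∈ F, q ≠ p ∧ (some (T q) = v ∨ S q = v)) →
      next v p = h.choose := fun v p h => dif_pos h
  have hnext_neg : ∀ v p, ¬(∃ q ∈ F, q ≠ p ∧ (some (T q) = v ∨ S q = v)) →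
      next v p = p := fun v p h => dif_neg h
  have hstart : e0 ∈ F ∧ (some (T e0) = v0 ∨ S e0 = v0) ∧
      (v0 ≠ none → ∀ q ∈ F, S q ≠ none) ∧ (v0 = none ∨ v0 = some (T e0)) := by
    by_cases h : ∃ p ∈ F, S p = none
    · have hs : start = (h.choose, none) := dif_pos h
      obtain ⟨h1, h2⟩ := h.choose_spec
      have he : e0 = h.choose := by rw [show e0 = start.1 from rfl, hs]
      have hv : v0 = none := by rw [show v0 = start.2 from rfl, hs]
      rw [he, hv]
      exact ⟨h1, Or.inr h2, fun hne => absurd rfl hne, Or.inl rfl⟩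
    · have hs : start = (p₀, some (T p₀)) := dif_neg h
      have he : e0 = p₀ := by rw [show e0 = start.1 from rfl, hs]
      have hv : v0 = some (T p₀) := by rw [show v0 = start.2 from rfl, hs]
      push_neg at h
      rw [he, hv]
      exact ⟨hp₀, Or.inl rfl, fun _ => h, Or.inr rfl⟩
  have F1 : ∀ k, E k ∈ F := by
    intro k
    induction k with
    | zero => exact hstart.1
    | succ k ih =>
      rw [hEsucc]
      by_cases h : ∃ q ∈ F, q ≠ E k ∧ (some (T q) = V (k + 1) ∨ S q = V (k + 1))
      · rw [hnext_pos _ _ h]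
        exact h.choose_spec.1
      · rw [hnext_neg _ _ h]
        exact ih
  have F2 : ∀ k, (some (T (E k)) = V (k + 1) ∨ S (E k) = V (k + 1)) ∧ V (k + 1) ≠ V k := by
    intro k
    rw [hVsucc]
    by_cases h : some (T (E k)) = V k
    · rw [hother_pos _ _ h]
      exact ⟨Or.inr rfl, fun heq => hSne (E k) (F1 k) (heq.trans h.symm)⟩
    · rw [hother_neg _ _ h]
      exact ⟨Or.inl rfl, h⟩
  have F3 : ∀ k, (some (T (E k)) = V k ∨ S (E k) = V k) →
      ((some (T (E k)) = V k ∧ S (E k) = V (k + 1)) ∨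
       (some (T (E k)) = V (k + 1) ∧ S (E k) = V k)) := by
    intro k hik
    rw [hVsucc]
    by_cases h : some (T (E k)) = V k
    · rw [hother_pos _ _ h]
      exact Or.inl ⟨h, rfl⟩
    · rcases hik with h' | h'
      · exact absurd h' h
      · rw [hother_neg _ _ h]
        exact Or.inr ⟨rfl, h'⟩
  have F4 : ∀ k i, V k = some i → FP.deg i = n := by
    intro k
    induction k with
    | zero =>
      intro i hi
      rw [hV0] at hi
      rcases hstart.2.2.2 with hv | hv
      · rw [hv] at hi; exact absurd hi (by simp)
      · rw [hv] at hi
        injection hi with hi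
        rw [← hi]
        exact hT e0 hstart.1
    | succ k _ =>
      intro i hi
      rw [hVsucc] at hi
      by_cases h : some (T (E k)) = V k
      · rw [hother_pos _ _ h] at hi
        exact (hS (E k) (F1 k) i hi).1
      · rw [hother_neg _ _ h] at hi
        injection hi with hi
        rw [← hi]
        exact hT (E k) (F1 k)
  let Vset : Finset (Option I) := insert none ((F.image fun q => some (T q)) ∪ F.image S)
  have F5 : ∀ k, V k ∈ Vset := by
    intro k
    induction k with
    | zero =>
      rcases hstart.2.2.2 with hv | hv <;> rw [hV0, hv]
      · exact Finset.mem_insert_self _ _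
      · exact Finset.mem_insert_of_mem (Finset.mem_union_left _
          (Finset.mem_image_of_mem _ hstart.1))
    | succ k _ =>
      rw [hVsucc]
      by_cases h : some (T (E k)) = V k
      · rw [hother_pos _ _ h]
        exact Finset.mem_insert_of_mem (Finset.mem_union_right _
          (Finset.mem_image_of_mem _ (F1 k)))
      · rw [hother_neg _ _ h]
        exact Finset.mem_insert_of_mem (Finset.mem_union_left _
          (Finset.mem_image_of_mem _ (F1 k)))
  have hpig : ∃ b, ∃ a, a < b ∧ V a = V b := by
    obtain ⟨a, -, b, -, hab, heq⟩ :=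
      Finset.exists_ne_map_eq_of_card_lt_of_maps_to
        (s := Finset.range (Vset.card + 1)) (t := Vset) (by simp) (fun k _ => F5 k)
    rcases lt_or_gt_of_ne hab with h | h
    · exact ⟨b, a, h, heq⟩
    · exact ⟨a, b, h, heq.symm⟩
  set k0 := Nat.find hpig with hk0
  obtain ⟨j, hjk, hVjk⟩ := Nat.find_spec hpig
  have hmin : ∀ b, b < k0 → ∀ a, a < b → V a ≠ V b := by
    intro b hb a hab heq
    exact Nat.find_min hpig hb ⟨a, hab, heq⟩
  -- Step D : validity of the walk below k0
  have valid : ∀ l, l < k0 → ((some (T (E l)) = V l ∨ S (E l) = V l) ∧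
      (0 < l → E l ≠ E (l - 1) ∧ V l ≠ none)) := by
    intro l hlk
    rcases l with _ | l
    · rw [hE0, hV0]
      exact ⟨hstart.2.1, fun h => absurd h (lt_irrefl 0)⟩
    · have hVn : V (l + 1) ≠ none := by
        intro hnone
        by_cases hv0 : v0 = none
        · exact hmin (l + 1) hlk 0 (Nat.succ_pos l) (by rw [hV0, hv0, hnone])
        · have hnored := hstart.2.2.1 (by rw [← hV0] at hv0 ⊢; exact hv0)
          rw [hVsucc] at hnone
          by_cases h : some (T (E l)) = V l
          · rw [hother_pos _ _ h] at hnone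
            exact hnored (E l) (F1 l) hnone
          · rw [hother_neg _ _ h] at hnone
            exact absurd hnone (by simp)
      obtain ⟨i, hVi⟩ : ∃ i, V (l + 1) = some i := by
        cases hv : V (l + 1) with
        | none => exact absurd hv hVn
        | some i => exact ⟨i, rfl⟩
      have hex : ∃ q ∈ F, q ≠ E l ∧ (some (T q) = V (l + 1) ∨ S q = V (l + 1)) := by
        have hinc1 : some (T (E l)) = some i ∨ S (E l) = some i := by
          rw [← hVi]; exact (F2 l).1
        obtain ⟨q, hqF, hqne, hqinc⟩ := balance i (E l) (F1 l) hinc1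
        exact ⟨q, hqF, hqne, by rw [hVi]; exact hqinc⟩
      obtain ⟨hqF, hqne, hqinc⟩ := hex.choose_spec
      have hEe : E (l + 1) = hex.choose := by rw [hEsucc, hnext_pos _ _ hex]
      rw [hEe]
      exact ⟨hqinc, fun _ => ⟨by simpa using hqne, hVn⟩⟩
  -- Step E : the first edge of the cycle appears only once
  have Enej : ∀ b, j < b → b < k0 → E b ≠ E j := by
    intro b hjb hbk heq
    have pj := F3 j ((valid j (lt_trans hjb hbk)).1)
    have pb := F3 b (valid b hbk).1
    rw [heq] at pb
    have hVb : V b = V j ∨ V b = V (j + 1) := by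
      rcases pj with ⟨hj1, hj2⟩ | ⟨hj1, hj2⟩ <;> rcases pb with ⟨hb1, hb2⟩ | ⟨hb1, hb2⟩
      · exact Or.inl (hb1.symm.trans hj1)
      · exact Or.inr (hb2.symm.trans hj2)
      · exact Or.inr (hb1.symm.trans hj1)
      · exact Or.inl (hb2.symm.trans hj2)
    rcases hVb with hVb | hVb
    · exact hmin b hbk j hjb hVb.symm
    · rcases Nat.lt_or_ge (j + 1) b with h | h
      · exact hmin b hbk (j + 1) h hVb.symm
      · have hb1 : b = j + 1 := le_antisymm (by omega) (by omega)
        have h2 := ((valid b hbk).2 (by omega)).1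
        rw [hb1] at h2 heq
        simpa using h2 heq
  -- Step F : construction of the canceling sequence
  let m := k0 - j
  have hm : 0 < m := by omega
  have hjm : j + m = k0 := by omega
  let pp : ℕ → P := fun t => E (j + t)
  let εK : ℕ → K := fun t => if some (T (E (j + t))) = V (j + t) then (-1 : K) else 1
  let entry : ℕ → R := fun t =>
    if some (T (E (j + t))) = V (j + t) then -(FP.rel (E (j + t))) else FP.rel (E (j + t))
  let toQ : Option I → W ⧸ FP.FWlt n := fun o => o.elim 0 (fun i => (FP.FWlt n).mkQ (FP.web i))
  let ls : List R := (List.range m).map entry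
  let lw : List (W ⧸ FP.FWlt n) := (List.range (m + 1)).map (fun t => toQ (V (j + t)))
  have hlsl : ls.length = m := by rw [List.length_map, List.length_range]
  have hlwl : lw.length = m + 1 := by rw [List.length_map, List.length_range]
  have hlsget : ∀ t, t < m → ls.getD t 0 = entry t := fun t ht => getD_map_range m t entry 0 ht
  have hlwget : ∀ t, t < m + 1 → lw.getD t 0 = toQ (V (j + t)) :=
    fun t ht => getD_map_range (m + 1) t _ 0 ht
  have hmidne : ∀ t, 0 < t → t < m → toQ (V (j + t)) ≠ 0 := by
    intro t ht0 htm
    have hVn : V (j + t) ≠ none := ((valid (j + t) (by omega)).2 (by omega)).2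
    cases hv : V (j + t) with
    | none => exact absurd hv hVn
    | some i =>
      show toQ (some i) ≠ 0
      exact FP.mkQ_web_ne_zero (F4 (j + t) i hv)
  have hentry : ∀ t, t < m → FP.lead n (entry t) = toQ (V (j + t + 1)) - toQ (V (j + t)) := by
    intro t htm
    have hvalid := valid (j + t) (by omega)
    have hLp := hL (E (j + t)) (F1 (j + t))
    have hVs : V (j + t + 1) = other (E (j + t)) (V (j + t)) := hVsucc (j + t)
    by_cases h : some (T (E (j + t))) = V (j + t)
    · have hent : entry t = -(FP.rel (E (j + t))) := if_pos h
      have hlead : FP.lead n (entry t) = -(FP.lead n (FP.rel (E (j + t)))) := by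
        rw [hent]; show (FP.FWlt n).mkQ (FP.d (-(FP.rel (E (j + t))))) = _
        rw [map_neg, map_neg]; rfl
      rw [hlead, hLp, hVs, hother_pos _ _ h, ← h]
      show -((FP.FWlt n).mkQ (FP.web (T (E (j + t)))) - toQ (S (E (j + t)))) =
        toQ (S (E (j + t))) - toQ (some (T (E (j + t))))
      rw [neg_sub]
      rfl
    · have hent : entry t = FP.rel (E (j + t)) := if_neg h
      have hSv : S (E (j + t)) = V (j + t) := by
        rcases hvalid.1 with h' | h'
        · exact absurd h' h
        · exact h'
      rw [hent, hLp, hVs, hother_neg _ _ h, ← hSv]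
      rfl
  have hwmem : ∀ t, (toQ (V (j + t)) = 0 ∨
      ∃ i : I, FP.deg i = n ∧ toQ (V (j + t)) = (FP.FWlt n).mkQ (FP.web i)) := by
    intro t
    cases hv : V (j + t) with
    | none => exact Or.inl rfl
    | some i => exact Or.inr ⟨i, F4 (j + t) i hv, rfl⟩
  let csq : FP.CancelingSeq n :=
    { s := ls
      w := lw
      nonempty := by rw [hlsl]; exact hm
      len := by rw [hlsl, hlwl]
      signed := by
        intro x hx
        obtain ⟨t, htm, rfl⟩ := List.mem_map.mp hx
        rw [List.mem_range] at htm
        refine ⟨E (j + t), ?_, hdeg _ (F1 (j + t))⟩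
        by_cases h : some (T (E (j + t))) = V (j + t)
        · exact Or.inr (if_pos h)
        · exact Or.inl (if_neg h)
      w_mem := by
        intro u hu
        obtain ⟨t, htm, rfl⟩ := List.mem_map.mp hu
        exact hwmem t
      w_mid_ne := by
        intro t ht0 hts
        rw [hlsl] at hts
        rw [hlwget t (by omega)]
        exact hmidne t ht0 hts
      w_cycle := by
        rw [hlsl, hlwget 0 (by omega), hlwget m (by omega)]
        show toQ (V j) = toQ (V (j + m))
        rw [hjm, hVjk]
      lead_step := by
        intro t hts
        rw [hlsl] at hts
        rw [hlsget t hts, hlwget (t + 1) (by omega), hlwget t (by omega)]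
        exact hentry t hts }
  refine ⟨m, pp, εK, csq, hm, fun t _ => F1 (j + t), ?_, ?_, ?_⟩
  · intro t _
    by_cases h : some (T (E (j + t))) = V (j + t)
    · exact Or.inr (if_pos h)
    · exact Or.inl (if_neg h)
  · intro t ht0 htm
    show E (j + t) ≠ E (j + 0)
    rw [Nat.add_zero]
    exact Enej (j + t) (by omega) (by omega)
  · show ls.sum = _
    rw [sum_list_range_map entry m]
    refine Finset.sum_congr rfl (fun t _ => ?_)
    show entry t = εK t • FP.rel (pp t)
    by_cases h : some (T (E (j + t))) = V (j + t)
    · rw [show entry t = -(FP.rel (E (j + t))) from if_pos h,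
        show εK t = (-1 : K) from if_pos h, neg_smul, one_smul]
    · rw [show entry t = FP.rel (E (j + t)) from if_neg h,
        show εK t = (1 : K) from if_neg h, one_smul]


end Ext2

section Reduce

variable {K W R I P : Type*} [Field K]
  [AddCommGroup W] [Module K W] [AddCommGroup R] [Module K R]
  (FP : FilteredPresentation K W R I P)

lemma reduce (hrel : ∀ p : P, FP.IsReductionRel p ∨ FP.IsHorizontalRel p) {n : ℕ}
    (H : ∀ c : FP.CancelingSeq n, c.ConsistentlyReducible) :
    ∀ (N : ℕ) (F : Finset P) (c : P → K), F.card ≤ N → (∀ p ∈ F, FP.rdeg p = n) →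
      FP.d (∑ p ∈ F, c p • FP.rel p) ∈ FP.FWlt n →
      ∃ y ∈ FP.FRlt n, FP.d y = FP.d (∑ p ∈ F, c p • FP.rel p) := by
  intro N
  induction N with
  | zero =>
    intro F c hcard _ _
    have hFe : F = ∅ := Finset.card_eq_zero.mp (Nat.le_zero.mp hcard)
    refine ⟨0, Submodule.zero_mem _, ?_⟩
    rw [hFe]
    simp
  | succ N ih =>
    intro F c hcard hdeg hsum
    classical
    set F' := F.filter (fun p => c p ≠ 0) with hF'
    have hxeq : ∑ p ∈ F', c p • FP.rel p = ∑ p ∈ F, c p • FP.rel p := by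
      refine Finset.sum_filter_of_ne (fun p _ h => ?_)
      intro hc0
      exact h (by rw [hc0, zero_smul])
    by_cases hFe : F' = ∅
    · refine ⟨0, Submodule.zero_mem _, ?_⟩
      rw [← hxeq, hFe]
      simp
    · have hF'ne : F'.Nonempty := Finset.nonempty_of_ne_empty hFe
      have hdeg' : ∀ p ∈ F', FP.rdeg p = n :=
        fun p hp => hdeg p (Finset.filter_subset _ _ hp)
      have hcne : ∀ p ∈ F', c p ≠ 0 := fun p hp => (Finset.mem_filter.mp hp).2
      have hsum' : FP.d (∑ p ∈ F', c p • FP.rel p) ∈ FP.FWlt n := by rw [hxeq]; exact hsum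
      obtain ⟨m, pp, ε, csq, hm, hppF, hε, hpp0, htotal⟩ :=
        FP.extraction hrel F' hF'ne c hdeg' hcne hsum'
      obtain ⟨y₁, hy₁, hdy₁⟩ := H csq
      set lam := c (pp 0) * ε 0 with hlam
      set c' : P → K :=
        fun q => c q - lam * ∑ t ∈ (Finset.range m).filter (fun t => pp t = q), ε t with hc'def
      have key : ∑ q ∈ F', c' q • FP.rel q
          = ∑ q ∈ F', c q • FP.rel q - lam • ∑ t ∈ Finset.range m, ε t • FP.rel (pp t) := by
        rw [Finset.smul_sum]
        have fib : ∑ t ∈ Finset.range m, lam • (ε t • FP.rel (pp t))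
            = ∑ q ∈ F', ∑ t ∈ (Finset.range m).filter (fun t => pp t = q),
                lam • (ε t • FP.rel (pp t)) :=
          (Finset.sum_fiberwise_of_maps_to (fun t ht => hppF t (Finset.mem_range.mp ht)) _).symm
        rw [fib, ← Finset.sum_sub_distrib]
        refine Finset.sum_congr rfl (fun q hq => ?_)
        have hin : ∑ t ∈ (Finset.range m).filter (fun t => pp t = q), lam • (ε t • FP.rel (pp t))
            = (lam * ∑ t ∈ (Finset.range m).filter (fun t => pp t = q), ε t) • FP.rel q := by
          rw [Finset.mul_sum, Finset.sum_smul]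
          refine Finset.sum_congr rfl (fun t ht => ?_)
          rw [(Finset.mem_filter.mp ht).2, smul_smul]
        rw [hin, sub_smul]
      have hc'0 : c' (pp 0) = 0 := by
        have hfib : (Finset.range m).filter (fun t => pp t = pp 0) = {0} := by
          ext t
          simp only [Finset.mem_filter, Finset.mem_range, Finset.mem_singleton]
          constructor
          · rintro ⟨htm, hpt⟩
            by_contra ht0
            exact hpp0 t (Nat.pos_of_ne_zero ht0) htm hpt
          · rintro rfl
            exact ⟨hm, rfl⟩
        show c (pp 0) - lam * _ = 0
        rw [hfib, Finset.sum_singleton, hlam]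
        rcases hε 0 hm with h | h <;> rw [h] <;> ring
      have hpp0F : pp 0 ∈ F' := hppF 0 hm
      have herase : ∑ q ∈ F'.erase (pp 0), c' q • FP.rel q = ∑ q ∈ F', c' q • FP.rel q :=
        Finset.sum_erase _ (by rw [hc'0, zero_smul])
      have hcard' : (F'.erase (pp 0)).card ≤ N := by
        have h1 : F'.card ≤ F.card := Finset.card_filter_le _ _
        have h2 := Finset.card_erase_of_mem hpp0F
        omega
      have hd' : FP.d (∑ q ∈ F'.erase (pp 0), c' q • FP.rel q) ∈ FP.FWlt n := by
        rw [herase, key, map_sub, map_smul]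
        refine Submodule.sub_mem _ hsum' (Submodule.smul_mem _ _ ?_)
        rw [← htotal, ← hdy₁]
        exact FP.d_mem_FWlt_of_FRlt hy₁
      obtain ⟨y₂, hy₂, hdy₂⟩ := ih (F'.erase (pp 0)) c' hcard'
        (fun p hp => hdeg' p (Finset.mem_of_mem_erase hp)) hd'
      refine ⟨y₂ + lam • y₁, Submodule.add_mem _ hy₂ (Submodule.smul_mem _ _ hy₁), ?_⟩
      rw [map_add, map_smul, hdy₂, herase, key, map_sub, map_smul, hdy₁, htotal, ← hxeq]
      abel

end Reduce
end FilteredPresentation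

/-- **Generalized diamond lemma for filtered presentations.**
Let `(R, W, d)` be a filtered presentation of vector spaces over a field `K` in which every
relator is either a reduction relator or a horizontal relator.  Then the presentation is
`E¹`-convergent if and only if every canceling sequence is consistently reducible. -/
theorem FilteredPresentation.e1Convergent_iff_forall_consistentlyReducible
    {K W R I P : Type*} [Field K]
    [AddCommGroup W] [Module K W] [AddCommGroup R] [Module K R]
    (FP : FilteredPresentation K W R I P)
    (hrel : ∀ p : P, FP.IsReductionRel p ∨ FP.IsHorizontalRel p) :
    FP.E1Convergent ↔
      ∀ (n : ℕ) (c : FP.CancelingSeq n), c.ConsistentlyReducible := by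
  constructor
  · intro hE1 n c
    exact hE1 n c.total (FP.total_mem_span c) (FP.d_total_mem_FWlt c)
  · intro H n x hx hdx
    have hsupp : ↑(FP.rel.repr x).support ⊆ {p | FP.rdeg p = n} :=
      FP.rel.mem_span_image.mp hx
    have hxeq : ∑ p ∈ (FP.rel.repr x).support, FP.rel.repr x p • FP.rel p = x := by
      have h1 := FP.rel.linearCombination_repr x
      rwa [Finsupp.linearCombination_apply, Finsupp.sum] at h1
    obtain ⟨y, hy, hdy⟩ := FP.reduce hrel (H n) (FP.rel.repr x).support.card
      (FP.rel.repr x).support (fun p => FP.rel.repr x p) le_rfl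
      (fun p hp => hsupp hp) (by rw [hxeq]; exact hdx)
    refine ⟨y, hy, ?_⟩
    rw [hdy, hxeq]
end

section
/- Decomposition lemma: Let (R, W, d) be a filtered presentation of vector spaces over a field K in which every relator is either a reduction relator or a horizontal relator. If x lies in the span of the relators of degree exactly n and d(x) ∈ Fₙ₋₁W, then there exist canceling sequences s¹, …, s^k of degree n and scalars b₁, …, b_k ∈ K such that x = b₁·(Σs¹) + … + b_k·(Σs^k). -/
/-!
The leading terms of the relators of degree `n` are the edges of a multigraph whose vertices are
the webs of degree `n` together with `0` (encoded as `none : Option I`): a reduction relator joins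
its web to `0`, a horizontal relator joins its two webs. If `d x ∈ Fₙ₋₁W`, the leading terms of
the relators in the support of `x` cancel at every web, so no web is an endpoint of exactly one
of these edges. A longest path in this graph, starting at `0` if it meets `0`, then closes up to
a cycle that meets `0` at most at its ends, that is, to a canceling sequence. Subtracting a
multiple of its sum removes a relator from the support of `x`; induct on the size of the support.
-/

lemma Set.InjOn.ite_lt {α : Type*} {f : ℕ → α} {k : ℕ} {a : α} (hf : Set.InjOn f (Set.Iio k))
    (ha : ∀ i < k, f i ≠ a) : Set.InjOn (fun i => if i < k then f i else a) (Set.Iio (k + 1)) := by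
  intro i hi i' hi' h
  simp only [Set.mem_Iio] at hi hi'
  beta_reduce at h
  split_ifs at h with h₁ h₂ h₂
  · exact hf h₁ h₂ h
  · exact absurd h (ha i h₁)
  · exact absurd h.symm (ha i' h₂)
  · omega

lemma Set.InjOn.comp_tsub {α : Type*} {f : ℕ → α} {k : ℕ} (hf : Set.InjOn f (Set.Iio (k + 1))) :
    Set.InjOn (fun i => f (k - i)) (Set.Iio (k + 1)) := by
  intro i hi i' hi' h
  simp only [Set.mem_Iio] at hi hi'
  have := hf (show k - i < k + 1 by omega) (show k - i' < k + 1 by omega) h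
  omega

namespace Multigraph

/- A multigraph has edge set `S`, the edge `p` running from `tail p` to `head p`. A walk of
length `k` is indexed by `ℕ`: its edge `e i` joins the vertices `x i` and `x (i + 1)`, `i < k`. -/

variable {V P : Type*} (S : Finset P) (head tail : P → V)

def Incident (p : P) (v : V) : Prop := head p = v ∨ tail p = v

def Joins (p : P) (u v : V) : Prop := (tail p = u ∧ head p = v) ∨ (tail p = v ∧ head p = u)

def Loopless : Prop := ∀ p ∈ S, head p ≠ tail p

def NoLeafExcept (z : V) : Prop :=
  ∀ p ∈ S, ∀ v, v ≠ z → Incident head tail p v → ∃ q ∈ S, q ≠ p ∧ Incident head tail q v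

def IsWalk (k : ℕ) (e : ℕ → P) (x : ℕ → V) : Prop :=
  ∀ i < k, e i ∈ S ∧ Joins head tail (e i) (x i) (x (i + 1))

structure IsPath (z : V) (k : ℕ) (e : ℕ → P) (x : ℕ → V) : Prop where
  walk : IsWalk S head tail k e x
  injOn : Set.InjOn x (Set.Iio (k + 1))
  ne : ∀ i, 0 < i → i ≤ k → x i ≠ z

structure IsCycle (z : V) (m : ℕ) (e : ℕ → P) (x : ℕ → V) : Prop where
  pos : 0 < m
  walk : IsWalk S head tail m e x
  injOn_edge : Set.InjOn e (Set.Iio m)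
  closed : x m = x 0
  ne : ∀ i, 0 < i → i < m → x i ≠ z

variable {S head tail} {p q : P} {u v w z : V} {k : ℕ} {e : ℕ → P} {x : ℕ → V}

lemma Joins.symm (h : Joins head tail p u v) : Joins head tail p v u := Or.symm h

lemma Joins.incident (h : Joins head tail p u v) : Incident head tail p u := by
  rcases h with ⟨h, -⟩ | ⟨-, h⟩
  exacts [Or.inr h, Or.inl h]

lemma Joins.eq_or_eq (h : Joins head tail p u v) (hw : Incident head tail p w) :
    w = u ∨ w = v := by
  unfold Joins Incident at *
  aesop

lemma Joins.ne (h : Joins head tail p u v) (hp : head p ≠ tail p) : u ≠ v := by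
  rintro rfl
  rcases h with ⟨h₁, h₂⟩ | ⟨h₁, h₂⟩ <;> exact hp (h₂.trans h₁.symm)

lemma Incident.exists_joins (h : Incident head tail p w) : ∃ v, Joins head tail p w v := by
  rcases h with h | h
  exacts [⟨tail p, Or.inr ⟨rfl, h⟩⟩, ⟨head p, Or.inl ⟨h, rfl⟩⟩]

lemma IsWalk.snoc (h : IsWalk S head tail k e x) (hq : q ∈ S) (hj : Joins head tail q (x k) v) :
    IsWalk S head tail (k + 1) (fun i => if i < k then e i else q)
      (fun i => if i < k + 1 then x i else v) := by
  intro i hi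
  by_cases hik : i < k
  · simpa [hik, hik.le, show i + 1 < k + 1 by omega] using h i hik
  · obtain rfl : i = k := by omega
    simpa using ⟨hq, hj⟩

lemma IsWalk.drop (h : IsWalk S head tail k e x) (j : ℕ) :
    IsWalk S head tail (k - j) (fun i => e (j + i)) (fun i => x (j + i)) :=
  fun i hi => h (j + i) (by omega)

lemma IsWalk.reverse (h : IsWalk S head tail k e x) :
    IsWalk S head tail k (fun i => e (k - 1 - i)) (fun i => x (k - i)) := by
  intro i hi
  obtain ⟨hmem, hj⟩ := h (k - 1 - i) (by omega)
  have hj' := hj.symm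
  rw [show k - 1 - i + 1 = k - i by omega] at hj'
  refine ⟨hmem, ?_⟩
  simpa only [show k - (i + 1) = k - 1 - i by omega] using hj'

lemma IsPath.eq_or_eq_succ_of_incident (h : IsPath S head tail z k e x) {i j : ℕ} (hi : i < k)
    (hj : j ≤ k) (hinc : Incident head tail (e i) (x j)) : j = i ∨ j = i + 1 := by
  rcases (h.walk i hi).2.eq_or_eq hinc with h' | h'
  · exact Or.inl (h.injOn (by simp; omega) (by simp; omega) h')
  · exact Or.inr (h.injOn (by simp; omega) (by simp; omega) h')

lemma IsPath.injOn_edge (h : IsPath S head tail z k e x) : Set.InjOn e (Set.Iio k) := by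
  have key : ∀ i < k, ∀ i' < k, i < i' → e i ≠ e i' := by
    intro i hi i' hi' hlt heq
    have hinc := (h.walk i hi).2.incident
    rw [heq] at hinc
    rcases h.eq_or_eq_succ_of_incident hi' hi.le hinc with h' | h' <;> omega
  intro i hi i' hi' heq
  simp only [Set.mem_Iio] at hi hi'
  rcases lt_trichotomy i i' with hlt | heq' | hgt
  · exact absurd heq (key i hi i' hi' hlt)
  · exact heq'
  · exact absurd heq.symm (key i' hi' i hi hgt)

lemma IsPath.card_le (h : IsPath S head tail z k e x) : k ≤ S.card := by
  simpa using Finset.card_le_card_of_injOn e (s := Finset.range k)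
    (fun i hi => (h.walk i (by simpa using hi)).1) (by simpa using h.injOn_edge)

lemma isPath_one (hp : p ∈ S) (hj : Joins head tail p u v) (hne : u ≠ v) (hv : v ≠ z) :
    IsPath S head tail z 1 (fun _ => p) (fun i => if i = 0 then u else v) where
  walk i hi := by
    obtain rfl : i = 0 := by omega
    simpa using ⟨hp, hj⟩
  injOn i hi i' hi' h := by
    simp only [Set.mem_Iio] at hi hi'
    beta_reduce at h
    split_ifs at h <;> first | omega | exact absurd h hne | exact absurd h.symm hne
  ne i hi hi' := by simpa [show i ≠ 0 by omega] using hv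

lemma exists_isPath_one (hne : Loopless S head tail) (hS : S.Nonempty) :
    ∃ e x, IsPath S head tail z 1 e x := by
  obtain ⟨p, hp⟩ := hS
  by_cases hz : head p = z
  · exact ⟨_, _, isPath_one hp (Or.inr ⟨rfl, rfl⟩) (hne p hp) (hz ▸ (hne p hp).symm)⟩
  · exact ⟨_, _, isPath_one hp (Or.inl ⟨rfl, rfl⟩) (hne p hp).symm hz⟩

lemma IsPath.exists_isCycle_or_extend (hne : Loopless S head tail)
    (hbal : NoLeafExcept S head tail z)
    (h : IsPath S head tail z k e x) (hk : 0 < k) :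
    (∃ m e x, IsCycle S head tail z m e x) ∨ ∃ e x, IsPath S head tail z (k + 1) e x := by
  obtain ⟨hlast_mem, hlast⟩ := h.walk (k - 1) (by omega)
  rw [Nat.sub_add_cancel hk] at hlast
  obtain ⟨q, hqS, hq_ne, hq⟩ := hbal _ hlast_mem (x k) (h.ne k hk le_rfl) hlast.symm.incident
  obtain ⟨v, hqv⟩ := hq.exists_joins
  have hq_fresh : ∀ i < k, e i ≠ q := by
    rintro i hi rfl
    rcases h.eq_or_eq_succ_of_incident hi le_rfl hq with h' | h'
    · omega
    · exact hq_ne (by rw [h', Nat.add_sub_cancel])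
  by_cases hv : ∃ j ≤ k, x j = v
  · obtain ⟨j, hjk, rfl⟩ := hv
    have hjk' : j < k := lt_of_le_of_ne hjk fun hjk => hqv.ne (hne q hqS) (by rw [hjk])
    left
    refine ⟨k - j + 1, _, _, ⟨by omega, (h.walk.drop j).snoc (v := x j) hqS ?_, ?_, ?_, ?_⟩⟩
    · simpa only [Nat.add_sub_cancel' hjk, add_zero] using hqv
    · refine Set.InjOn.ite_lt (f := fun i => e (j + i)) ?_ fun i hi => hq_fresh _ (by omega)
      exact h.injOn_edge.comp (add_right_injective j).injOn fun i hi => by simp at hi ⊢; omega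
    · simp
    · intro i hi hi'
      simpa [hi'] using h.ne (j + i) (by omega) (by omega)
  · push Not at hv
    have hinj := h.injOn.ite_lt (fun i hi => hv i (by omega))
    by_cases hvz : v = z
    · -- the new vertex is `z`: reverse the extended path so that it starts at `z`
      subst hvz
      refine Or.inr ⟨_, _, (h.walk.snoc hqS hqv).reverse, hinj.comp_tsub, ?_⟩
      intro i hi hi'
      simpa [show k + 1 - i < k + 1 by omega] using hv (k + 1 - i) (by omega)
    · refine Or.inr ⟨_, _, h.walk.snoc hqS hqv, hinj, fun i hi hi' => ?_⟩
      by_cases hik : i < k + 1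
      · simpa [hik] using h.ne i hi (by omega)
      · simpa [hik] using hvz

theorem exists_isCycle (hne : Loopless S head tail)
    (hbal : NoLeafExcept S head tail z)
    (hS : S.Nonempty) : ∃ m e x, IsCycle S head tail z m e x := by
  by_contra hno
  have hpath : ∀ k, ∃ e x, IsPath S head tail z (k + 1) e x := by
    intro k
    induction k with
    | zero => exact exists_isPath_one hne hS
    | succ k ih =>
      obtain ⟨e, x, h⟩ := ih
      exact (h.exists_isCycle_or_extend hne hbal k.succ_pos).resolve_left hno
  obtain ⟨e, x, h⟩ := hpath S.card
  exact absurd h.card_le (by omega)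

end Multigraph

lemma List.sum_eq_sum_range_getD {M : Type*} [AddCommMonoid M] (l : List M) :
    l.sum = ∑ k ∈ Finset.range l.length, l.getD k 0 := by
  induction l with
  | nil => simp
  | cons a l ih => simp [Finset.sum_range_succ', ih, add_comm]

lemma List.getD_map_range {α : Type*} (f : ℕ → α) {k l : ℕ} (hk : k < l) (d : α) :
    ((List.range l).map f).getD k d = f k := by
  simp [hk]

lemma Finsupp.support_sub_smul_subset_erase {α K : Type*} [DecidableEq α] [Field K]
    {f g : α →₀ K} {a : α} (hg : g.support ⊆ f.support) (ha : g a ≠ 0) :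
    (f - (f a / g a) • g).support ⊆ f.support.erase a := by
  intro q hq
  rw [Finsupp.mem_support_iff, Finsupp.sub_apply, Finsupp.smul_apply, smul_eq_mul] at hq
  refine Finset.mem_erase.mpr ⟨fun hqa => hq (by rw [hqa, div_mul_cancel₀ _ ha, sub_self]), ?_⟩
  by_contra hqf
  have hgq : g q = 0 := Finsupp.notMem_support_iff.mp fun h => hqf (hg h)
  exact hq (by rw [Finsupp.notMem_support_iff.mp hqf, hgq, mul_zero, sub_zero])

namespace FilteredPresentation

variable {K W R I P : Type*} [Field K]
  [AddCommGroup W] [Module K W] [AddCommGroup R] [Module K R]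
  (FP : FilteredPresentation K W R I P) {n : ℕ}

namespace CancelingSeq

variable {FP}

lemma d_total_mem (c : FP.CancelingSeq n) : FP.d c.total ∈ FP.FWlt n := by
  have hstep := c.lead_step
  simp only [lead] at hstep
  rw [← Submodule.Quotient.mk_eq_zero, ← Submodule.mkQ_apply, total, List.sum_eq_sum_range_getD,
    map_sum, map_sum, Finset.sum_congr rfl fun k hk => hstep k (Finset.mem_range.mp hk),
    Finset.sum_range_sub (fun k => c.w.getD k 0), c.w_cycle, sub_self]

end CancelingSeq

lemma exists_cancelingSeq_of_fun (m : ℕ) (hm : 0 < m) (s : ℕ → R) (w : ℕ → W ⧸ FP.FWlt n)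
    (signed : ∀ i < m, ∃ p : P, (s i = FP.rel p ∨ s i = -FP.rel p) ∧ FP.rdeg p = n)
    (w_mem : ∀ i ≤ m, w i = 0 ∨ ∃ j : I, FP.deg j = n ∧ w i = (FP.FWlt n).mkQ (FP.web j))
    (w_mid_ne : ∀ i, 0 < i → i < m → w i ≠ 0) (w_cycle : w 0 = w m)
    (lead_step : ∀ i < m, FP.lead n (s i) = w (i + 1) - w i) :
    ∃ c : FP.CancelingSeq n, c.total = ∑ i ∈ Finset.range m, s i := by
  refine ⟨⟨(List.range m).map s, (List.range (m + 1)).map w, by simpa using hm, by simp,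
    ?_, ?_, ?_, ?_, ?_⟩, ?_⟩
  · simpa using signed
  · intro u hu
    obtain ⟨i, hi, rfl⟩ := List.mem_map.mp hu
    exact w_mem i (Nat.lt_succ_iff.mp (List.mem_range.mp hi))
  · intro i hi hi'
    simp only [List.length_map, List.length_range] at hi'
    rw [List.getD_map_range _ (by omega)]
    exact w_mid_ne i hi hi'
  · simpa [List.getD_map_range] using w_cycle
  · intro i hi
    simp only [List.length_map, List.length_range] at hi
    rw [List.getD_map_range _ hi, List.getD_map_range _ (by omega),
      List.getD_map_range _ (by omega)]
    exact lead_step i hi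
  · change ((List.range m).map s).sum = _
    rw [List.sum_eq_sum_range_getD, List.length_map, List.length_range]
    exact Finset.sum_congr rfl fun i hi => List.getD_map_range _ (Finset.mem_range.mp hi) _

noncomputable def webClass (n : ℕ) (v : Option I) : W ⧸ FP.FWlt n :=
  v.elim 0 fun i => (FP.FWlt n).mkQ (FP.web i)

lemma FWlt_le_ker_coord {i : I} (hi : n ≤ FP.deg i) :
    FP.FWlt n ≤ LinearMap.ker (FP.web.coord i) := by
  rw [FWlt, Submodule.span_le]
  rintro _ ⟨j, hj, rfl⟩
  have hji : j ≠ i := by rintro rfl; exact absurd hi (not_le.mpr hj)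
  simp [hji]

noncomputable def coordQ {i : I} (hi : n ≤ FP.deg i) : (W ⧸ FP.FWlt n) →ₗ[K] K :=
  (FP.FWlt n).liftQ (FP.web.coord i) (FP.FWlt_le_ker_coord hi)

open Classical in
lemma coordQ_webClass {i : I} (hi : n ≤ FP.deg i) (v : Option I) :
    FP.coordQ hi (FP.webClass n v) = if v = some i then 1 else 0 := by
  cases v with
  | none => simp [webClass]
  | some j => simp [webClass, coordQ, Finsupp.single_apply, eq_comm]

lemma webClass_some_ne_zero {i : I} (hi : n ≤ FP.deg i) : FP.webClass n (some i) ≠ 0 :=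
  fun h => by simpa [h] using FP.coordQ_webClass hi (some i)

lemma webClass_eq_zero_or {v : Option I} (hv : ∀ i ∈ v, FP.deg i = n) :
    FP.webClass n v = 0 ∨ ∃ i, FP.deg i = n ∧ FP.webClass n v = (FP.FWlt n).mkQ (FP.web i) := by
  cases v with
  | none => exact Or.inl rfl
  | some i => exact Or.inr ⟨i, hv i rfl, rfl⟩

lemma lead_smul (c : K) (y : R) : FP.lead n (c • y) = c • FP.lead n y := by
  simp only [lead, map_smul]

lemma lead_eq_sum (y : R) :
    FP.lead n y = ∑ p ∈ (FP.rel.repr y).support, FP.rel.repr y p • FP.lead n (FP.rel p) := by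
  conv_lhs => rw [← FP.rel.linearCombination_repr y]
  simp only [Finsupp.linearCombination_apply, Finsupp.sum, lead, map_sum, map_smul]

structure LeadingEdges (n : ℕ) (head tail : P → Option I) : Prop where
  head_ne_tail : ∀ p, FP.rdeg p = n → head p ≠ tail p
  lead_rel : ∀ p, FP.rdeg p = n →
    FP.lead n (FP.rel p) = FP.webClass n (head p) - FP.webClass n (tail p)
  deg_eq : ∀ p, FP.rdeg p = n → ∀ i, Multigraph.Incident head tail p (some i) → FP.deg i = n

lemma exists_leadingEdges (hrel : ∀ p : P, FP.IsReductionRel p ∨ FP.IsHorizontalRel p) (n : ℕ) :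
    ∃ head tail : P → Option I, FP.LeadingEdges n head tail := by
  have h : ∀ p, ∃ e : Option I × Option I, FP.rdeg p = n → e.1 ≠ e.2 ∧
      FP.lead n (FP.rel p) = FP.webClass n e.1 - FP.webClass n e.2 ∧
      ∀ i, e.1 = some i ∨ e.2 = some i → FP.deg i = n := by
    intro p
    rcases hrel p with ⟨i, hi, hlead⟩ | ⟨i, j, hij, hi, hj, hlead⟩
    · refine ⟨(some i, none), ?_⟩
      rintro rfl
      refine ⟨by simp, by simpa [webClass] using hlead, ?_⟩
      rintro k (hk | hk) <;> simp at hk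
      exact hk ▸ hi
    · refine ⟨(some i, some j), ?_⟩
      rintro rfl
      refine ⟨by simpa using hij, by simpa [webClass] using hlead, ?_⟩
      rintro k (hk | hk) <;> simp only [Option.some.injEq] at hk <;> subst hk <;> assumption
  choose e he using h
  exact ⟨fun p => (e p).1, fun p => (e p).2, fun p hp => (he p hp).1, fun p hp => (he p hp).2.1,
    fun p hp => (he p hp).2.2⟩

variable {FP} {head tail : P → Option I}

open Classical in
lemma LeadingEdges.noLeafExcept (hE : FP.LeadingEdges n head tail) {y : R}
    (hy : ∀ p ∈ (FP.rel.repr y).support, FP.rdeg p = n) (hdy : FP.d y ∈ FP.FWlt n) :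
    Multigraph.NoLeafExcept (FP.rel.repr y).support head tail none := by
  intro p hp v hv hpv
  obtain ⟨i, rfl⟩ := Option.ne_none_iff_exists'.mp hv
  by_contra! hno
  set a := FP.rel.repr y
  have hi : n ≤ FP.deg i := (hE.deg_eq p (hy p hp) i hpv).ge
  have hcoord : ∀ q ∈ a.support, FP.coordQ hi (FP.lead n (FP.rel q)) =
      (if head q = some i then 1 else 0) - (if tail q = some i then 1 else 0) := by
    intro q hq
    rw [hE.lead_rel q (hy q hq), map_sub, FP.coordQ_webClass, FP.coordQ_webClass]
  -- the coordinate of `i` in the leading term of `y` vanishes, but only the edge `p` contributes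
  have hsum : ∑ q ∈ a.support, a q * FP.coordQ hi (FP.lead n (FP.rel q)) = 0 := by
    have h0 : FP.lead n y = 0 := (Submodule.Quotient.mk_eq_zero _).mpr hdy
    simpa [FP.lead_eq_sum y, map_sum] using congrArg (FP.coordQ hi) h0
  rw [Finset.sum_eq_single p (fun q hq hqp => ?_) (absurd hp), hcoord p hp] at hsum
  · have hap : a p ≠ 0 := Finsupp.mem_support_iff.mp hp
    have hpt := hE.head_ne_tail p (hy p hp)
    rcases hpv with h | h
    · simp [h, hap, show tail p ≠ some i from h ▸ hpt.symm] at hsum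
    · simp [h, hap, show head p ≠ some i from h ▸ hpt] at hsum
  · have hqi := hno q hq hqp
    simp only [Multigraph.Incident, not_or] at hqi
    simp [hcoord q hq, hqi.1, hqi.2]

lemma LeadingEdges.exists_sign (hE : FP.LeadingEdges n head tail) {p : P} (hp : FP.rdeg p = n)
    {u v : Option I} (huv : Multigraph.Joins head tail p u v) :
    ∃ ε : K, (ε = 1 ∨ ε = -1) ∧
      FP.lead n (ε • FP.rel p) = FP.webClass n v - FP.webClass n u := by
  rcases huv with ⟨hu, hv⟩ | ⟨hv, hu⟩
  · exact ⟨1, Or.inl rfl, by rw [one_smul, hE.lead_rel p hp, hu, hv]⟩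
  · exact ⟨-1, Or.inr rfl, by rw [FP.lead_smul, hE.lead_rel p hp, hu, hv, neg_one_smul, neg_sub]⟩

lemma LeadingEdges.exists_cancelingSeq_of_isCycle (hE : FP.LeadingEdges n head tail)
    {S : Finset P} (hS : ∀ p ∈ S, FP.rdeg p = n) {m : ℕ} {e : ℕ → P} {x : ℕ → Option I}
    (hc : Multigraph.IsCycle S head tail none m e x) :
    ∃ c : FP.CancelingSeq n,
      (FP.rel.repr c.total).support ⊆ S ∧ FP.rel.repr c.total (e 0) ≠ 0 := by
  classical
  have hsign : ∀ i, ∃ ε : K, i < m → (ε = 1 ∨ ε = -1) ∧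
      FP.lead n (ε • FP.rel (e i)) = FP.webClass n (x (i + 1)) - FP.webClass n (x i) := by
    intro i
    by_cases hi : i < m
    · obtain ⟨hmem, hj⟩ := hc.walk i hi
      obtain ⟨ε, hε⟩ := hE.exists_sign (hS _ hmem) hj
      exact ⟨ε, fun _ => hε⟩
    · exact ⟨0, fun h => absurd h hi⟩
  choose ε hε using hsign
  have hdeg : ∀ i ≤ m, ∀ j ∈ x i, FP.deg j = n := by
    have hlt : ∀ i < m, ∀ j ∈ x i, FP.deg j = n := fun i hi j hj => by
      obtain ⟨hmem, hjoin⟩ := hc.walk i hi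
      exact hE.deg_eq _ (hS _ hmem) j (Option.mem_def.mp hj ▸ hjoin.incident)
    intro i hi
    rcases hi.lt_or_eq with hi | rfl
    exacts [hlt i hi, hc.closed ▸ hlt 0 hc.pos]
  obtain ⟨c, hc_total⟩ := FP.exists_cancelingSeq_of_fun m hc.pos (fun i => ε i • FP.rel (e i))
    (fun i => FP.webClass n (x i))
    (fun i hi => ⟨e i, by rcases (hε i hi).1 with h | h <;> simp [h], hS _ (hc.walk i hi).1⟩)
    (fun i hi => FP.webClass_eq_zero_or (hdeg i hi))
    (fun i hi hi' => by
      obtain ⟨j, hj⟩ := Option.ne_none_iff_exists'.mp (hc.ne i hi hi')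
      rw [hj]
      exact FP.webClass_some_ne_zero (hdeg i hi'.le j hj).ge)
    (by rw [hc.closed]) (fun i hi => (hε i hi).2)
  have hrepr : ∀ q, FP.rel.repr c.total q =
      ∑ i ∈ Finset.range m, if e i = q then ε i else 0 := by
    intro q
    simp [hc_total, Finsupp.single_apply]
  refine ⟨c, fun q hq => ?_, ?_⟩
  · obtain ⟨i, hi, hiq⟩ :=
      Finset.exists_ne_zero_of_sum_ne_zero (hrepr q ▸ Finsupp.mem_support_iff.mp hq)
    rw [ite_ne_right_iff] at hiq
    exact hiq.1 ▸ (hc.walk i (Finset.mem_range.mp hi)).1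
  · rw [hrepr, Finset.sum_eq_single_of_mem 0 (Finset.mem_range.mpr hc.pos), if_pos rfl]
    · rcases (hε 0 hc.pos).1 with h | h <;> simp [h]
    · intro i hi hi0
      rw [if_neg fun h => hi0 (hc.injOn_edge (Finset.mem_range.mp hi) hc.pos h)]

theorem LeadingEdges.mem_span_total (hE : FP.LeadingEdges n head tail) (y : R)
    (hy : ∀ p ∈ (FP.rel.repr y).support, FP.rdeg p = n) (hdy : FP.d y ∈ FP.FWlt n) :
    y ∈ Submodule.span K (Set.range (CancelingSeq.total : FP.CancelingSeq n → R)) := by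
  classical
  induction h : (FP.rel.repr y).support.card using Nat.strong_induction_on generalizing y with
  | _ N ih =>
  obtain rfl | hy0 := eq_or_ne y 0
  · exact zero_mem _
  obtain ⟨m, e, x, hc⟩ := Multigraph.exists_isCycle (z := none)
    (fun p hp => hE.head_ne_tail p (hy p hp))
    (hE.noLeafExcept hy hdy)
    (Finsupp.support_nonempty_iff.mpr (by simpa using hy0))
  obtain ⟨c, hc_supp, hc0⟩ := hE.exists_cancelingSeq_of_isCycle hy hc
  set r := FP.rel.repr y (e 0) / FP.rel.repr c.total (e 0)
  have hsupp : (FP.rel.repr (y - r • c.total)).support ⊆ (FP.rel.repr y).support.erase (e 0) := by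
    simpa only [map_sub, map_smul] using Finsupp.support_sub_smul_subset_erase hc_supp hc0
  have hcard := (Finset.card_le_card hsupp).trans_lt
    (Finset.card_erase_lt_of_mem (hc.walk 0 hc.pos).1)
  have hmem := ih _ (h ▸ hcard) (y - r • c.total)
    (fun p hp => hy p (Finset.mem_of_mem_erase (hsupp hp)))
    (by rw [map_sub, map_smul]; exact sub_mem hdy (Submodule.smul_mem _ r c.d_total_mem)) rfl
  simpa using add_mem hmem (Submodule.smul_mem _ r (Submodule.subset_span ⟨c, rfl⟩))

end FilteredPresentation

/-- **Decomposition lemma.**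
Let `(R, W, d)` be a filtered presentation of vector spaces over a field `K` in which every
relator is either a reduction relator or a horizontal relator.  If `x` lies in the span of
the relators of degree exactly `n` and `d x ∈ Fₙ₋₁W`, then there exist canceling sequences
`s¹, …, sᵏ` of degree `n` and scalars `b₁, …, b_k ∈ K` with
`x = b₁ • (Σs¹) + ⋯ + b_k • (Σsᵏ)`. -/
theorem FilteredPresentation.decomposition_into_canceling_sequences
    {K W R I P : Type*} [Field K]
    [AddCommGroup W] [Module K W] [AddCommGroup R] [Module K R]
    (FP : FilteredPresentation K W R I P)
    (hrel : ∀ p : P, FP.IsReductionRel p ∨ FP.IsHorizontalRel p)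
    (n : ℕ) (x : R)
    (hx : x ∈ Submodule.span K ((fun p => FP.rel p) '' {p | FP.rdeg p = n}))
    (hdx : FP.d x ∈ FP.FWlt n) :
    ∃ (k : ℕ) (c : Fin k → FP.CancelingSeq n) (b : Fin k → K),
      x = ∑ j : Fin k, b j • (c j).total := by
  obtain ⟨head, tail, hE⟩ := FP.exists_leadingEdges hrel n
  have hmem := hE.mem_span_total x (fun p hp => FP.rel.mem_span_image.mp hx hp) hdx
  obtain ⟨k, b, c, hsum⟩ := Submodule.mem_span_set'.mp hmem
  choose c' hc' using fun j => (c j).2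
  exact ⟨k, c', b, by simp only [hc', hsum]⟩
end

section
/- Spanning lemma for relators in a linear monoidal category: Let K be a field and C a K-linear monoidal category. Suppose Web is a family of subsets Web(X,Y) ⊆ Hom(X,Y) such that for all objects X, Y the K-vector space Hom(X,Y) is spanned by Web(X,Y). Let R be a family of subsets R(X,Y) ⊆ Hom(X,Y). Let Rel be the smallest family of subsets of the Hom-spaces that contains R and is closed under the four operations f ↦ g ∘ f, f ↦ f ∘ g, f ↦ g ⊗ f, and f ↦ f ⊗ g, where g ranges over all webs (whenever the composite or tensor product is defined), and let ⟨R⟩ be the smallest family of K-subspaces of the Hom-spaces that contains R and is closed under the same four operations with g ranging over all morphisms of C. Then for all objects X and Y, the K-span of Rel(X,Y) equals ⟨R⟩(X,Y). -/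
open CategoryTheory

universe v u

/-- `Rel` : the smallest family of subsets of the Hom-spaces of a monoidal category that
contains the family `Rl` and is closed under the four operations `f ↦ f ≫ g`, `f ↦ g ≫ f`,
`f ↦ f ⊗ g`, `f ↦ g ⊗ f`, where `g` ranges over all *webs* (elements of the family `Web`),
whenever the composite or tensor product is defined. -/
inductive RelClosure {C : Type u} [Category.{v} C] [MonoidalCategory C]
    (Web Rl : ∀ X Y : C, Set (X ⟶ Y)) : ∀ X Y : C, (X ⟶ Y) → Prop
  | base {X Y : C} {f : X ⟶ Y} (hf : f ∈ Rl X Y) : RelClosure Web Rl X Y f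
  | comp_right {X Y Z : C} {f : X ⟶ Y} (g : Y ⟶ Z) (hf : RelClosure Web Rl X Y f)
      (hg : g ∈ Web Y Z) : RelClosure Web Rl X Z (f ≫ g)
  | comp_left {X Y Z : C} (g : X ⟶ Y) {f : Y ⟶ Z} (hf : RelClosure Web Rl Y Z f)
      (hg : g ∈ Web X Y) : RelClosure Web Rl X Z (g ≫ f)
  | tensor_right {X Y X' Y' : C} {f : X ⟶ Y} (g : X' ⟶ Y') (hf : RelClosure Web Rl X Y f)
      (hg : g ∈ Web X' Y') :
      RelClosure Web Rl (MonoidalCategory.tensorObj X X') (MonoidalCategory.tensorObj Y Y')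
        (MonoidalCategory.tensorHom f g)
  | tensor_left {X Y X' Y' : C} (g : X' ⟶ Y') {f : X ⟶ Y} (hf : RelClosure Web Rl X Y f)
      (hg : g ∈ Web X' Y') :
      RelClosure Web Rl (MonoidalCategory.tensorObj X' X) (MonoidalCategory.tensorObj Y' Y)
        (MonoidalCategory.tensorHom g f)

/-- `⟨Rl⟩` : the smallest family of `K`-subspaces of the Hom-spaces of a `K`-linear monoidal
category that contains the family `Rl` and is closed under the four operations `f ↦ f ≫ g`,
`f ↦ g ≫ f`, `f ↦ f ⊗ g`, `f ↦ g ⊗ f`, where `g` ranges over *all* morphisms of the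
category.  (The subspace conditions are the `zero`, `add` and `smul` constructors.) -/
inductive RelSpan (K : Type*) [Field K] {C : Type u} [Category.{v} C] [Preadditive C]
    [CategoryTheory.Linear K C] [MonoidalCategory C]
    (Rl : ∀ X Y : C, Set (X ⟶ Y)) : ∀ X Y : C, (X ⟶ Y) → Prop
  | base {X Y : C} {f : X ⟶ Y} (hf : f ∈ Rl X Y) : RelSpan K Rl X Y f
  | zero {X Y : C} : RelSpan K Rl X Y 0
  | add {X Y : C} {f g : X ⟶ Y} (hf : RelSpan K Rl X Y f) (hg : RelSpan K Rl X Y g) :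
      RelSpan K Rl X Y (f + g)
  | smul {X Y : C} (a : K) {f : X ⟶ Y} (hf : RelSpan K Rl X Y f) : RelSpan K Rl X Y (a • f)
  | comp_right {X Y Z : C} {f : X ⟶ Y} (g : Y ⟶ Z) (hf : RelSpan K Rl X Y f) :
      RelSpan K Rl X Z (f ≫ g)
  | comp_left {X Y Z : C} (g : X ⟶ Y) {f : Y ⟶ Z} (hf : RelSpan K Rl Y Z f) :
      RelSpan K Rl X Z (g ≫ f)
  | tensor_right {X Y X' Y' : C} {f : X ⟶ Y} (g : X' ⟶ Y') (hf : RelSpan K Rl X Y f) :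
      RelSpan K Rl (MonoidalCategory.tensorObj X X') (MonoidalCategory.tensorObj Y Y')
        (MonoidalCategory.tensorHom f g)
  | tensor_left {X Y X' Y' : C} (g : X' ⟶ Y') {f : X ⟶ Y} (hf : RelSpan K Rl X Y f) :
      RelSpan K Rl (MonoidalCategory.tensorObj X' X) (MonoidalCategory.tensorObj Y' Y)
        (MonoidalCategory.tensorHom g f)

open MonoidalCategory

theorem Submodule.apply_mem_span_of_mem_span {K M N P : Type*} [CommSemiring K]
    [AddCommMonoid M] [AddCommMonoid N] [AddCommMonoid P]
    [Module K M] [Module K N] [Module K P] (B : M →ₗ[K] N →ₗ[K] P)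
    {s : Set M} {t : Set N} {u : Set P} (hu : ∀ m ∈ s, ∀ n ∈ t, B m n ∈ u)
    {m : M} {n : N} (hm : m ∈ span K s) (hn : n ∈ span K t) : B m n ∈ span K u :=
  span_mono (Set.image2_subset_iff.2 hu) (map₂_span_span K B s t ▸ apply_mem_map₂ B hm hn)

section

variable (K : Type*) [Field K] {C : Type u} [Category.{v} C] [Preadditive C]
  [CategoryTheory.Linear K C] [MonoidalCategory C]

def MonoidalLinear.tensorHomBilin [MonoidalPreadditive C] [MonoidalLinear K C]
    (X Y X' Y' : C) : (X ⟶ Y) →ₗ[K] (X' ⟶ Y') →ₗ[K] (X ⊗ X' ⟶ Y ⊗ Y') :=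
  LinearMap.mk₂ K (fun f g => f ⊗ₘ g) MonoidalPreadditive.add_tensor
    (fun a f g => by simp [MonoidalCategory.tensorHom_def]) MonoidalPreadditive.tensor_add
    (fun a f g => by simp [MonoidalCategory.tensorHom_def])

variable {K} in
theorem RelClosure.relSpan {Web Rl : ∀ X Y : C, Set (X ⟶ Y)} {X Y : C} {f : X ⟶ Y}
    (hf : RelClosure Web Rl X Y f) : RelSpan K Rl X Y f := by
  induction hf with
  | base hf => exact .base hf
  | comp_right g _ _ h => exact .comp_right g h
  | comp_left g _ _ h => exact .comp_left g h
  | tensor_right g _ _ h => exact .tensor_right g h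
  | tensor_left g _ _ h => exact .tensor_left g h

def relSpanSubmodule (Rl : ∀ X Y : C, Set (X ⟶ Y)) (X Y : C) : Submodule K (X ⟶ Y) where
  carrier := {f | RelSpan K Rl X Y f}
  zero_mem' := .zero
  add_mem' := .add
  smul_mem' := .smul

def spanRelClosure (Web Rl : ∀ X Y : C, Set (X ⟶ Y)) (X Y : C) : Submodule K (X ⟶ Y) :=
  Submodule.span K {f | RelClosure Web Rl X Y f}

theorem spanRelClosure_le_relSpanSubmodule (Web Rl : ∀ X Y : C, Set (X ⟶ Y)) (X Y : C) :
    spanRelClosure K Web Rl X Y ≤ relSpanSubmodule K Rl X Y :=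
  Submodule.span_le.2 fun _ hf => hf.relSpan

end

section

variable {K : Type*} [Field K] {C : Type u} [Category.{v} C] [Preadditive C]
  [CategoryTheory.Linear K C] [MonoidalCategory C]
  {Web Rl : ∀ X Y : C, Set (X ⟶ Y)} (hWeb : ∀ X Y : C, Submodule.span K (Web X Y) = ⊤)

include hWeb

/- Each closure operation is bilinear, so closure of `Rel` under webs gives closure of its span
under the span of the webs, i.e. under all morphisms. -/
theorem comp_mem_spanRelClosure_right {X Y Z : C} {f : X ⟶ Y}
    (hf : f ∈ spanRelClosure K Web Rl X Y) (g : Y ⟶ Z) :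
    f ≫ g ∈ spanRelClosure K Web Rl X Z :=
  Submodule.apply_mem_span_of_mem_span (Linear.comp X Y Z)
    (fun _ hf _ hg => RelClosure.comp_right _ hf hg) hf (hWeb Y Z ▸ Submodule.mem_top)

theorem comp_mem_spanRelClosure_left {X Y Z : C} (g : X ⟶ Y) {f : Y ⟶ Z}
    (hf : f ∈ spanRelClosure K Web Rl Y Z) : g ≫ f ∈ spanRelClosure K Web Rl X Z :=
  Submodule.apply_mem_span_of_mem_span (Linear.comp X Y Z)
    (fun _ hg _ hf => RelClosure.comp_left _ hf hg) (hWeb X Y ▸ Submodule.mem_top) hf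

variable [MonoidalPreadditive C] [MonoidalLinear K C]

theorem tensorHom_mem_spanRelClosure_right {X Y X' Y' : C} {f : X ⟶ Y}
    (hf : f ∈ spanRelClosure K Web Rl X Y) (g : X' ⟶ Y') :
    f ⊗ₘ g ∈ spanRelClosure K Web Rl (X ⊗ X') (Y ⊗ Y') :=
  Submodule.apply_mem_span_of_mem_span (MonoidalLinear.tensorHomBilin K X Y X' Y')
    (fun _ hf _ hg => RelClosure.tensor_right _ hf hg) hf (hWeb X' Y' ▸ Submodule.mem_top)

theorem tensorHom_mem_spanRelClosure_left {X Y X' Y' : C} (g : X' ⟶ Y') {f : X ⟶ Y}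
    (hf : f ∈ spanRelClosure K Web Rl X Y) :
    g ⊗ₘ f ∈ spanRelClosure K Web Rl (X' ⊗ X) (Y' ⊗ Y) :=
  Submodule.apply_mem_span_of_mem_span (MonoidalLinear.tensorHomBilin K X' Y' X Y)
    (fun _ hg _ hf => RelClosure.tensor_left _ hf hg) (hWeb X' Y' ▸ Submodule.mem_top) hf

theorem RelSpan.mem_spanRelClosure {X Y : C} {f : X ⟶ Y} (hf : RelSpan K Rl X Y f) :
    f ∈ spanRelClosure K Web Rl X Y := by
  induction hf with
  | base hf => exact Submodule.subset_span (RelClosure.base hf)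
  | zero => exact zero_mem _
  | add _ _ h₁ h₂ => exact add_mem h₁ h₂
  | smul a _ h => exact Submodule.smul_mem _ a h
  | comp_right g _ h => exact comp_mem_spanRelClosure_right hWeb h g
  | comp_left g _ h => exact comp_mem_spanRelClosure_left hWeb g h
  | tensor_right g _ h => exact tensorHom_mem_spanRelClosure_right hWeb h g
  | tensor_left g _ h => exact tensorHom_mem_spanRelClosure_left hWeb g h

end

/-- **Spanning lemma for relators in a linear monoidal category.**
Let `K` be a field and `C` a `K`-linear monoidal category.  Suppose `Web` is a family of
subsets `Web X Y ⊆ Hom(X, Y)` such that for all objects `X, Y` the `K`-vector space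
`Hom(X, Y)` is spanned by `Web X Y`.  Let `Rl` be a family of subsets
`Rl X Y ⊆ Hom(X, Y)`.  Then for all objects `X` and `Y`, the `K`-span of `Rel X Y` equals
`⟨Rl⟩ X Y`. -/
theorem span_relClosure_eq_relSpan (K : Type*) [Field K]
    {C : Type u} [Category.{v} C] [Preadditive C] [CategoryTheory.Linear K C]
    [MonoidalCategory C] [MonoidalPreadditive C] [MonoidalLinear K C]
    (Web Rl : ∀ X Y : C, Set (X ⟶ Y))
    (hWeb : ∀ X Y : C, Submodule.span K (Web X Y) = ⊤) :
    ∀ X Y : C,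
      (Submodule.span K {f : X ⟶ Y | RelClosure Web Rl X Y f} : Set (X ⟶ Y)) =
        {f : X ⟶ Y | RelSpan K Rl X Y f} := fun X Y =>
  Set.Subset.antisymm (spanRelClosure_le_relSpanSubmodule K Web Rl X Y)
    fun _ hf => RelSpan.mem_spanRelClosure hWeb hf
end

section
/- Consistent reducibility passes through decompositions: Let (R, W, d) be a filtered presentation of vector spaces over a field K. If a reduction sequence s of degree n decomposes into reduction sequences s′ and s″, and both s′ and s″ are consistently reducible, then s is consistently reducible. -/
namespace FilteredPresentation.CancelingSeq

variable {K W R I P : Type*} [Field K]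
  [AddCommGroup W] [Module K W] [AddCommGroup R] [Module K R]
  {FP : FilteredPresentation K W R I P} {n : ℕ}

/-- Two canceling sequences `s` and `s′` of the same degree `n` are *equivalent* if there
exists `y ∈ Fₙ₋₁R` with `d y = d (Σs − Σs′)`. -/
def Equivalent (c c' : FP.CancelingSeq n) : Prop :=
  ∃ y ∈ FP.FRlt n, FP.d y = FP.d (c.total - c'.total)

/-- A reduction sequence `s` of degree `n` *decomposes into* reduction sequences `s′` and
`s″` if there exist a reduction sequence `t = (t₁, …, t_m)` of degree `n` equivalent to `s`,
an index `1 ≤ k < m`, and a signed relator `ρ` of degree `n` whose underlying relator is a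
reduction relator, such that `s′ = (t₁, …, t_k, ρ)` and `s″ = (−ρ, t_{k+1}, …, t_m)` are
both reduction sequences of degree `n`. -/
def DecomposesInto (c c' c'' : FP.CancelingSeq n) : Prop :=
  ∃ (t : FP.CancelingSeq n) (k : ℕ) (ρ : R),
    t.IsReductionSeq ∧ c.Equivalent t ∧
    1 ≤ k ∧ k < t.s.length ∧
    (∃ p : P, (ρ = FP.rel p ∨ ρ = -FP.rel p) ∧ FP.rdeg p = n ∧ FP.IsReductionRel p) ∧
    c'.s = t.s.take k ++ [ρ] ∧
    c''.s = -ρ :: t.s.drop k ∧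
    c'.IsReductionSeq ∧ c''.IsReductionSeq

end FilteredPresentation.CancelingSeq


/-! Both `Σs − Σt` (equivalence of `s` and `t`) and consistent reducibility say that an element
lies in the submodule `d⁻¹(d(Fₙ₋₁R))`; since the `ρ` and `−ρ` cancel, `Σt = Σs′ + Σs″`, so
`Σs = (Σs − Σt) + Σs′ + Σs″` lies in that submodule as well. -/

theorem List.sum_take_append_singleton_add_sum_neg_cons_drop {M : Type*} [AddCommGroup M]
    (l : List M) (k : ℕ) (ρ : M) :
    (l.take k ++ [ρ]).sum + (-ρ :: l.drop k).sum = l.sum := by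
  conv_rhs => rw [← List.take_append_drop k l]
  simp only [List.sum_append, List.sum_cons, List.sum_nil]
  abel

namespace FilteredPresentation

variable {K W R I P : Type*} [Field K]
  [AddCommGroup W] [Module K W] [AddCommGroup R] [Module K R]
  (FP : FilteredPresentation K W R I P)

def reducibleBelow (n : ℕ) : Submodule K R :=
  ((FP.FRlt n).map FP.d).comap FP.d

variable {FP}

theorem mem_reducibleBelow {n : ℕ} {x : R} :
    x ∈ FP.reducibleBelow n ↔ ∃ y ∈ FP.FRlt n, FP.d y = FP.d x :=
  Iff.rfl

namespace CancelingSeq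

variable {n : ℕ} {c c' c'' : FP.CancelingSeq n}

theorem consistentlyReducible_iff :
    c.ConsistentlyReducible ↔ c.total ∈ FP.reducibleBelow n :=
  mem_reducibleBelow.symm

theorem equivalent_iff : c.Equivalent c' ↔ c.total - c'.total ∈ FP.reducibleBelow n :=
  mem_reducibleBelow.symm

theorem DecomposesInto.exists_equivalent_total_eq (h : c.DecomposesInto c' c'') :
    ∃ t : FP.CancelingSeq n, c.Equivalent t ∧ t.total = c'.total + c''.total := by
  obtain ⟨t, k, ρ, -, hequiv, -, -, -, hs', hs'', -, -⟩ := h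
  refine ⟨t, hequiv, ?_⟩
  rw [total, total, total, hs', hs'', List.sum_take_append_singleton_add_sum_neg_cons_drop]

end CancelingSeq

end FilteredPresentation

theorem FilteredPresentation.CancelingSeq.consistentlyReducible_of_decomposesInto_general
    {K W R I P : Type*} [Field K]
    [AddCommGroup W] [Module K W] [AddCommGroup R] [Module K R]
    {FP : FilteredPresentation K W R I P} {n : ℕ}
    (c c' c'' : FP.CancelingSeq n)
    (hdec : c.DecomposesInto c' c'')
    (h' : c'.ConsistentlyReducible) (h'' : c''.ConsistentlyReducible) :
    c.ConsistentlyReducible := by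
  obtain ⟨t, hequiv, htotal⟩ := hdec.exists_equivalent_total_eq
  rw [consistentlyReducible_iff] at h' h'' ⊢
  rw [equivalent_iff] at hequiv
  have hsplit : c.total = (c.total - t.total) + (c'.total + c''.total) := by
    rw [← htotal]; abel
  rw [hsplit]
  exact add_mem hequiv (add_mem h' h'')

/-- **Consistent reducibility passes through decompositions.**
Let `(R, W, d)` be a filtered presentation of vector spaces over a field `K`.  If a
reduction sequence `s` of degree `n` decomposes into reduction sequences `s′` and `s″`, and
both `s′` and `s″` are consistently reducible, then `s` is consistently reducible. -/
theorem FilteredPresentation.CancelingSeq.consistentlyReducible_of_decomposesInto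
    {K W R I P : Type*} [Field K]
    [AddCommGroup W] [Module K W] [AddCommGroup R] [Module K R]
    {FP : FilteredPresentation K W R I P} {n : ℕ}
    (c c' c'' : FP.CancelingSeq n)
    (hc : c.IsReductionSeq)
    (hdec : c.DecomposesInto c' c'')
    (h' : c'.ConsistentlyReducible) (h'' : c''.ConsistentlyReducible) :
    c.ConsistentlyReducible :=
  FilteredPresentation.CancelingSeq.consistentlyReducible_of_decomposesInto_general c c' c'' hdec h'
    h''
end
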